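/- arXiv:math/0305336 — 2 statements merged into one kernel-verified Lean document; each statement's English description precedes it below -/
import Mathlib

section
/- The order dimension of a finite poset P is equal to the smallest d such that there exist posets Q₁,…,Q_d, induced subposets P₁,…,P_d of P, and order-preserving maps η_i : P_i → Q_i for i = 1,…,d, with the property that for every subcritical pair (j,m) of P there is some i with j,m ∈ P_i and η_i(m) < η_i(j). -/
/-!
An embedding `f : P → ℝᵈ` is the same as `d` monotone coordinates such that every pair
`x ≰ y` is reversed (`f y i < f x i`) by one of them. In a finite poset every pair `x ≰ y`
lies above a subcritical pair `(j, m)` with `j ≤ x`, `y ≤ m`, so it suffices to reverse the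
subcritical pairs. A partial map `η : S → Q` reversing `(j, m)` extends to a monotone
`ℕ`-valued map on all of `P`: send `x` to the number of `z ∈ S` with `η z` below `η w` for some
`w ∈ S`, `w ≤ x`. This count strictly grows from `y` to `x` whenever `y ≤ m` and `j ≤ x`,
because `j` is counted for `x` but not for `y`.
-/

/-- `(j, m)` is a subcritical pair in the poset `P`: `j ≰ m`, everything strictly below `j`
is below `m`, and everything strictly above `m` is above `j`. -/
def Subcritical {P : Type*} [PartialOrder P] (j m : P) : Prop :=
  ¬ j ≤ m ∧ (∀ x, x < j → x ≤ m) ∧ (∀ x, m < x → j ≤ x)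

/-- The order dimension of a poset `P`: the smallest `d` such that `P` embeds as an induced
subposet of ℝᵈ with the componentwise order. -/
noncomputable def orderDim (P : Type*) [PartialOrder P] : ℕ :=
  sInf {d : ℕ | ∃ f : P → (Fin d → ℝ), ∀ x y : P, x ≤ y ↔ ∀ i, f x i ≤ f y i}

open Set

lemma exists_subcritical_of_not_le {P : Type*} [PartialOrder P] [WellFoundedLT P]
    [WellFoundedGT P] {x y : P} (hxy : ¬ x ≤ y) : ∃ j m : P, Subcritical j m ∧ j ≤ x ∧ y ≤ m := by
  obtain ⟨j, ⟨hjx, hjy⟩, hj_min⟩ :=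
    wellFounded_lt.has_min {j | j ≤ x ∧ ¬ j ≤ y} ⟨x, le_rfl, hxy⟩
  obtain ⟨m, ⟨hym, hjm⟩, hm_max⟩ :=
    wellFounded_gt.has_min {m | y ≤ m ∧ ¬ j ≤ m} ⟨y, le_rfl, hjy⟩
  have below_j : ∀ z, z < j → z ≤ y := fun z hzj =>
    not_not.1 fun hzy => hj_min z ⟨hzj.le.trans hjx, hzy⟩ hzj
  refine ⟨j, m, ⟨hjm, fun z hzj => (below_j z hzj).trans hym, fun z hmz => ?_⟩, hjx, hym⟩
  exact not_not.1 fun hjz => hm_max z ⟨hym.trans hmz.le, hjz⟩ hmz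

section ExtendPartialMap

variable {P Q : Type*} [PartialOrder P] [Preorder Q] {S : Set P}

noncomputable def extendRank (η : S → Q) (x : P) : ℕ :=
  {z : S | η z ∈ lowerClosure (η '' {w | (w : P) ≤ x})}.ncard

variable [Finite P] (η : S → Q)

lemma extendRank_mono : Monotone (extendRank η) := fun _ _ hxy =>
  ncard_le_ncard (fun _ hz => lowerClosure_mono (image_mono fun _ hw => le_trans hw hxy) hz)
    (toFinite _)

lemma extendRank_lt_of_reverses (hη : Monotone η) {j m : S} (hmj : η m < η j) {x y : P}
    (hjx : (j : P) ≤ x) (hym : y ≤ m) : extendRank η y < extendRank η x := by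
  have below_m : ∀ {z : S}, η z ∈ lowerClosure (η '' {w | (w : P) ≤ y}) → η z ≤ η m := by
    rintro z ⟨_, ⟨w, hwy, rfl⟩, hzw⟩
    exact hzw.trans (hη (hwy.trans hym))
  refine ncard_lt_ncard ⟨fun z hz => ⟨η j, ⟨j, hjx, rfl⟩, (below_m hz).trans hmj.le⟩,
    not_subset.2 ⟨j, subset_lowerClosure ⟨j, hjx, rfl⟩, fun hj => ?_⟩⟩ (toFinite _)
  exact (below_m hj).not_gt hmj

end ExtendPartialMap

lemma exists_nat_embedding_of_reverses_subcritical {P ι : Type*} [PartialOrder P] [Finite P]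
    {Q : ι → Type*} [∀ i, Preorder (Q i)] (S : ι → Set P) (η : ∀ i, S i → Q i)
    (hη : ∀ i, Monotone (η i))
    (hrev : ∀ j m : P, Subcritical j m →
      ∃ (i : ι) (hj : j ∈ S i) (hm : m ∈ S i), η i ⟨m, hm⟩ < η i ⟨j, hj⟩) :
    ∃ f : P → ι → ℕ, ∀ x y : P, x ≤ y ↔ ∀ i, f x i ≤ f y i := by
  refine ⟨fun x i => extendRank (η i) x,
    fun x y => ⟨fun hxy i => extendRank_mono _ hxy, fun hf => not_not.1 fun hxy => ?_⟩⟩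
  obtain ⟨j, m, hjm, hjx, hym⟩ := exists_subcritical_of_not_le hxy
  obtain ⟨i, hj, hm, hmj⟩ := hrev j m hjm
  exact (extendRank_lt_of_reverses (η i) (hη i) hmj hjx hym).not_ge (hf i)

/-- **Proposition (Reading, Proposition 13).** The order dimension of a finite poset `P` is
the smallest `d` such that there exist posets `Q₁, …, Q_d`, induced subposets `P₁, …, P_d`
of `P`, and order-preserving maps `η_i : P_i → Q_i`, such that for every subcritical pair
`(j,m)` of `P` there is some `i` with `j, m ∈ P_i` and `η_i(m) < η_i(j)`. -/
theorem orderDim_eq_subcritical_reversing_partial_maps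
    (P : Type*) [PartialOrder P] [Fintype P] :
    orderDim P = sInf {d : ℕ | ∃ (Q : Fin d → Type) (iQ : ∀ i, PartialOrder (Q i))
      (Ps : Fin d → Set P) (η : ∀ i, ↥(Ps i) → Q i),
      (∀ i, @Monotone ↥(Ps i) (Q i) _ (iQ i).toPreorder (η i)) ∧
      ∀ j m : P, Subcritical j m →
        ∃ (i : Fin d) (hj : j ∈ Ps i) (hm : m ∈ Ps i),
          @LT.lt (Q i) ((iQ i).toPreorder.toLT) (η i ⟨m, hm⟩) (η i ⟨j, hj⟩)} := by
  unfold orderDim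
  congr 1
  ext d
  constructor
  · rintro ⟨f, hf⟩
    refine ⟨fun _ => ℝ, fun _ => inferInstance, fun _ => univ, fun i z => f z i,
      fun i u v huv => (hf u v).1 huv i, fun j m hjm => ?_⟩
    obtain ⟨i, hi⟩ := not_forall.1 (mt (hf j m).2 hjm.1)
    exact ⟨i, trivial, trivial, not_le.1 hi⟩
  · rintro ⟨Q, iQ, Ps, η, hη, hrev⟩
    obtain ⟨f, hf⟩ := exists_nat_embedding_of_reverses_subcritical Ps η hη hrev
    exact ⟨fun x i => f x i, fun x y => by simp only [hf, Nat.cast_le]⟩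
end

section
/- Let 𝒜 be a central hyperplane arrangement in ℝⁿ with base region B, let (J,M) be a subcritical pair in 𝒫(𝒜,B), and let H^J denote the hyperplane separating J from the unique region J_* covered by J. If a hyperplane H ∈ 𝒜 satisfies H ∉ S(J) and H ∈ S(M), then H^J is basic in the rank-two subarrangement consisting of all hyperplanes of 𝒜 containing H ∩ H^J. -/
open scoped RealInnerProductSpace

noncomputable section

variable {n : ℕ}

/-- A (linear) hyperplane in ℝⁿ: the zero set of a nonzero linear functional,
expressed via the inner product with a nonzero normal vector. -/
def IsHyperplane (H : Set (EuclideanSpace ℝ (Fin n))) : Prop :=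
  ∃ v : EuclideanSpace ℝ (Fin n), v ≠ 0 ∧ H = {x | ⟪v, x⟫ = 0}

/-- A central hyperplane arrangement: a finite nonempty collection of linear hyperplanes. -/
def IsCentralArrangement (A : Set (Set (EuclideanSpace ℝ (Fin n)))) : Prop :=
  A.Finite ∧ A.Nonempty ∧ ∀ H ∈ A, IsHyperplane H

/-- The complement of the union of the hyperplanes of the arrangement. -/
def arrComplement (A : Set (Set (EuclideanSpace ℝ (Fin n)))) : Set (EuclideanSpace ℝ (Fin n)) :=
  (⋃ H ∈ A, H)ᶜ

/-- A region of the arrangement: the closure of a connected component of the complement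
of the union of the hyperplanes. -/
def IsRegion (A : Set (Set (EuclideanSpace ℝ (Fin n)))) (R : Set (EuclideanSpace ℝ (Fin n))) :
    Prop :=
  ∃ x ∈ arrComplement A, R = closure (connectedComponentIn (arrComplement A) x)

/-- The hyperplane `H` separates the region `R` from the region `B`: their interiors lie on
strictly opposite sides of `H`. -/
def Separates (H R B : Set (EuclideanSpace ℝ (Fin n))) : Prop :=
  ∃ v : EuclideanSpace ℝ (Fin n), v ≠ 0 ∧ H = {x | ⟪v, x⟫ = 0} ∧
    (∀ x ∈ interior R, 0 < ⟪v, x⟫) ∧ (∀ x ∈ interior B, ⟪v, x⟫ < 0)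

/-- S(R): the set of hyperplanes of `A` separating `R` from the base region `B`. -/
def sepSet (A : Set (Set (EuclideanSpace ℝ (Fin n)))) (B R : Set (EuclideanSpace ℝ (Fin n))) :
    Set (Set (EuclideanSpace ℝ (Fin n))) :=
  {H | H ∈ A ∧ Separates H R B}

/-- The order of the poset of regions 𝒫(𝒜,B): containment of separating sets. -/
def regLE (A : Set (Set (EuclideanSpace ℝ (Fin n)))) (B R₁ R₂ : Set (EuclideanSpace ℝ (Fin n))) :
    Prop :=
  sepSet A B R₁ ⊆ sepSet A B R₂

/-- Strict order on regions. -/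
def regLT (A : Set (Set (EuclideanSpace ℝ (Fin n)))) (B R₁ R₂ : Set (EuclideanSpace ℝ (Fin n))) :
    Prop :=
  regLE A B R₁ R₂ ∧ ¬ regLE A B R₂ R₁

/-- The order dimension of the poset of regions 𝒫(𝒜,B): the smallest `d` such that it embeds
as an induced subposet of ℝᵈ with the componentwise order. -/
def regionOrderDim (A : Set (Set (EuclideanSpace ℝ (Fin n))))
    (B : Set (EuclideanSpace ℝ (Fin n))) : ℕ :=
  sInf {d : ℕ | ∃ f : {R : Set (EuclideanSpace ℝ (Fin n)) // IsRegion A R} → (Fin d → ℝ),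
    ∀ R₁ R₂, regLE A B R₁.1 R₂.1 ↔ ∀ i, f R₁ i ≤ f R₂ i}

/-- The rank-two subarrangement of `A` consisting of all hyperplanes of `A`
containing `H₁ ∩ H₂`. -/
def pencil (A : Set (Set (EuclideanSpace ℝ (Fin n)))) (H₁ H₂ : Set (EuclideanSpace ℝ (Fin n))) :
    Set (Set (EuclideanSpace ℝ (Fin n))) :=
  {H | H ∈ A ∧ H₁ ∩ H₂ ⊆ H}

/-- `H` is basic in the subarrangement `A'` relative to the base region `B`:
`H ∈ A'` and `H` bounds (meets in codimension one) the region `B'` of `A'` containing `B`. -/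
def IsBasicIn (A' : Set (Set (EuclideanSpace ℝ (Fin n)))) (B H : Set (EuclideanSpace ℝ (Fin n))) :
    Prop :=
  H ∈ A' ∧ ∃ B', IsRegion A' B' ∧ B ⊆ B' ∧
    Submodule.span ℝ (H ∩ B') = Submodule.span ℝ H

/-- The edge relation of the basic digraph 𝒟(𝒜,B): `H₁ → H₂` whenever `H₁` is basic in the
rank-two subarrangement consisting of all hyperplanes of `A` containing `H₁ ∩ H₂`. -/
def BasicEdge (A : Set (Set (EuclideanSpace ℝ (Fin n))))
    (B H₁ H₂ : Set (EuclideanSpace ℝ (Fin n))) : Prop :=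
  H₁ ∈ A ∧ H₂ ∈ A ∧ H₁ ≠ H₂ ∧ IsBasicIn (pencil A H₁ H₂) B H₁

/-- The hyperplane `H` with the cutting loci removed: for each rank-two subarrangement
containing `H` in which `H` is not basic, the codimension-two intersection is removed. -/
def shardCut (A : Set (Set (EuclideanSpace ℝ (Fin n)))) (B H : Set (EuclideanSpace ℝ (Fin n))) :
    Set (EuclideanSpace ℝ (Fin n)) :=
  H \ ⋃ H' ∈ {H' | H' ∈ A ∧ H' ≠ H ∧ ¬ IsBasicIn (pencil A H H') B H}, (H ∩ H')

/-- `Sg` is a shard of `(A,B)` contained in the hyperplane `H`: a connected component of `H`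
with the cutting loci removed. -/
def IsShardOf (A : Set (Set (EuclideanSpace ℝ (Fin n))))
    (B H Sg : Set (EuclideanSpace ℝ (Fin n))) : Prop :=
  H ∈ A ∧ ∃ x ∈ shardCut A B H, Sg = connectedComponentIn (shardCut A B H) x

/-- U(Σ): the regions meeting the shard `Sg` in codimension one whose separating set
contains the hyperplane `H` containing `Sg`. -/
def upperRegions (A : Set (Set (EuclideanSpace ℝ (Fin n))))
    (B H Sg : Set (EuclideanSpace ℝ (Fin n))) : Set (Set (EuclideanSpace ℝ (Fin n))) :=
  {R | IsRegion A R ∧ Submodule.span ℝ (R ∩ Sg) = Submodule.span ℝ H ∧ H ∈ sepSet A B R}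

/-- L(Σ): the regions meeting the shard `Sg` in codimension one whose separating set
does not contain the hyperplane `H` containing `Sg`. -/
def lowerRegions (A : Set (Set (EuclideanSpace ℝ (Fin n))))
    (B H Sg : Set (EuclideanSpace ℝ (Fin n))) : Set (Set (EuclideanSpace ℝ (Fin n))) :=
  {R | IsRegion A R ∧ Submodule.span ℝ (R ∩ Sg) = Submodule.span ℝ H ∧ H ∉ sepSet A B R}

/-- `J` is a minimal element of U(Σ), as a subposet of 𝒫(𝒜,B). -/
def MinimalInU (A : Set (Set (EuclideanSpace ℝ (Fin n))))
    (B H Sg J : Set (EuclideanSpace ℝ (Fin n))) : Prop :=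
  J ∈ upperRegions A B H Sg ∧
    ∀ R ∈ upperRegions A B H Sg, regLE A B R J → regLE A B J R

/-- `M` is a maximal element of L(Σ), as a subposet of 𝒫(𝒜,B). -/
def MaximalInL (A : Set (Set (EuclideanSpace ℝ (Fin n))))
    (B H Sg M : Set (EuclideanSpace ℝ (Fin n))) : Prop :=
  M ∈ lowerRegions A B H Sg ∧
    ∀ R ∈ lowerRegions A B H Sg, regLE A B M R → regLE A B R M

/-- `J` covers `Jst` in the poset of regions 𝒫(𝒜,B). -/
def CoversReg (A : Set (Set (EuclideanSpace ℝ (Fin n))))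
    (B J Jst : Set (EuclideanSpace ℝ (Fin n))) : Prop :=
  IsRegion A Jst ∧ regLT A B Jst J ∧
    ∀ R, IsRegion A R → regLT A B Jst R → regLT A B R J → False

/-- `R` is an upper bound of the set `X` of regions in 𝒫(𝒜,B). -/
def regIsUB (A : Set (Set (EuclideanSpace ℝ (Fin n)))) (B : Set (EuclideanSpace ℝ (Fin n)))
    (X : Set (Set (EuclideanSpace ℝ (Fin n)))) (R : Set (EuclideanSpace ℝ (Fin n))) : Prop :=
  ∀ R' ∈ X, regLE A B R' R

/-- `R` is the least upper bound of the set `X` of regions in 𝒫(𝒜,B). -/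
def regIsLUB (A : Set (Set (EuclideanSpace ℝ (Fin n)))) (B : Set (EuclideanSpace ℝ (Fin n)))
    (X : Set (Set (EuclideanSpace ℝ (Fin n)))) (R : Set (EuclideanSpace ℝ (Fin n))) : Prop :=
  regIsUB A B X R ∧ ∀ R', IsRegion A R' → regIsUB A B X R' → regLE A B R R'

/-- `R` is a lower bound of the set `X` of regions in 𝒫(𝒜,B). -/
def regIsLB (A : Set (Set (EuclideanSpace ℝ (Fin n)))) (B : Set (EuclideanSpace ℝ (Fin n)))
    (X : Set (Set (EuclideanSpace ℝ (Fin n)))) (R : Set (EuclideanSpace ℝ (Fin n))) : Prop :=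
  ∀ R' ∈ X, regLE A B R R'

/-- `R` is the greatest lower bound of the set `X` of regions in 𝒫(𝒜,B). -/
def regIsGLB (A : Set (Set (EuclideanSpace ℝ (Fin n)))) (B : Set (EuclideanSpace ℝ (Fin n)))
    (X : Set (Set (EuclideanSpace ℝ (Fin n)))) (R : Set (EuclideanSpace ℝ (Fin n))) : Prop :=
  regIsLB A B X R ∧ ∀ R', IsRegion A R' → regIsLB A B X R' → regLE A B R' R

/-- `J` is join-irreducible in 𝒫(𝒜,B): there is no set `X` of regions with `J ∉ X`
whose least upper bound is `J`. -/
def JoinIrredReg (A : Set (Set (EuclideanSpace ℝ (Fin n))))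
    (B J : Set (EuclideanSpace ℝ (Fin n))) : Prop :=
  IsRegion A J ∧ ¬ ∃ X : Set (Set (EuclideanSpace ℝ (Fin n))),
    (∀ R ∈ X, IsRegion A R) ∧ J ∉ X ∧ regIsLUB A B X J

/-- `M` is meet-irreducible in 𝒫(𝒜,B): there is no set `X` of regions with `M ∉ X`
whose greatest lower bound is `M`. -/
def MeetIrredReg (A : Set (Set (EuclideanSpace ℝ (Fin n))))
    (B M : Set (EuclideanSpace ℝ (Fin n))) : Prop :=
  IsRegion A M ∧ ¬ ∃ X : Set (Set (EuclideanSpace ℝ (Fin n))),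
    (∀ R ∈ X, IsRegion A R) ∧ M ∉ X ∧ regIsGLB A B X M

/-- `(J,M)` is a subcritical pair in the poset of regions 𝒫(𝒜,B). -/
def SubcritReg (A : Set (Set (EuclideanSpace ℝ (Fin n))))
    (B J M : Set (EuclideanSpace ℝ (Fin n))) : Prop :=
  IsRegion A J ∧ IsRegion A M ∧ ¬ regLE A B J M ∧
    (∀ X, IsRegion A X → regLT A B X J → regLE A B X M) ∧
    (∀ X, IsRegion A X → regLT A B M X → regLE A B J X)

/-!
Pick a point `p` of `H^J` on the segment from a point of `J_*` to a point of `J`. Since `J_*` and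
`J` are separated by `H^J` alone, `p` lies strictly on the `J_*`-side of every other hyperplane;
in particular on the base side of `H`. Let `K ≠ H^J` contain `H ∩ H^J`. If `p` were on the far
side of `K`, then `K ∈ S(J_*) ⊆ S(M)`. Writing the normal of `K` as `a ν_H + c ν_{H^J}`, the
point `p` forces `a < 0` and `B` forces `c > 0`, so `M` lies on the base side of `K` (as
`H ∈ S(M)` and `H^J ∉ S(M)`), a contradiction. Hence `p` lies in the closure of the region of
the rank-two subarrangement containing `B`, and so does `H ∩ H^J`; since `p ∉ H`, together they
span `H^J`.
-/

section InnerProductSpace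

variable {V : Type*} [NormedAddCommGroup V] [InnerProductSpace ℝ V]

theorem mem_span_pair_of_inter_subset {u v w : V}
    (h : {x | ⟪v, x⟫ = 0} ∩ {x | ⟪w, x⟫ = 0} ⊆ {x | ⟪u, x⟫ = 0}) :
    u ∈ Submodule.span ℝ {v, w} := by
  have hperp : (Submodule.span ℝ {v, w})ᗮ ≤ (ℝ ∙ u)ᗮ := by
    intro x hx
    rw [Submodule.span_insert, ← Submodule.inf_orthogonal, Submodule.mem_inf,
      Submodule.mem_orthogonal_singleton_iff_inner_right,
      Submodule.mem_orthogonal_singleton_iff_inner_right] at hx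
    exact Submodule.mem_orthogonal_singleton_iff_inner_right.mpr (h hx)
  have : FiniteDimensional ℝ (Submodule.span ℝ {v, w}) :=
    FiniteDimensional.span_of_finite ℝ (Set.toFinite _)
  rw [← Submodule.orthogonal_orthogonal (Submodule.span ℝ {v, w})]
  exact Submodule.orthogonal_le hperp
    (Submodule.le_orthogonal_orthogonal _ (Submodule.mem_span_singleton_self u))

theorem exists_eq_smul_of_setOf_inner_subset {u v : V}
    (h : {x | ⟪v, x⟫ = 0} ⊆ {x | ⟪u, x⟫ = 0}) : ∃ c : ℝ, u = c • v := by
  have hu := mem_span_pair_of_inter_subset (u := u) (v := v) (w := v) (by rwa [Set.inter_self])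
  rw [Set.pair_eq_singleton, Submodule.mem_span_singleton] at hu
  exact hu.imp fun c hc => hc.symm

theorem exists_mem_segment_inner_eq_zero {v x y : V} (hx : ⟪v, x⟫ < 0) (hy : 0 < ⟪v, y⟫) :
    ∃ p ∈ segment ℝ x y, ⟪v, p⟫ = 0 :=
  (convex_segment x y).isPreconnected.intermediate_value (left_mem_segment ℝ x y)
    (right_mem_segment ℝ x y) (continuous_const.inner continuous_id).continuousOn
    ⟨hx.le, hy.le⟩

theorem convex_setOf_inner_neg (v : V) : Convex ℝ {x | ⟪v, x⟫ < 0} :=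
  convex_halfSpace_lt (innerₛₗ ℝ v).isLinear 0

theorem span_inter_eq_span_of_mem_diff {v w p : V} {H T C : Set V}
    (hH : H = {x | ⟪v, x⟫ = 0}) (hT : T = {x | ⟪w, x⟫ = 0}) (hC : H ∩ T ⊆ C)
    (hpC : p ∈ C) (hp : p ∈ T \ H) :
    Submodule.span ℝ (T ∩ C) = Submodule.span ℝ T := by
  subst hH hT
  obtain ⟨hpw, hpv⟩ : ⟪w, p⟫ = 0 ∧ ⟪v, p⟫ ≠ 0 := hp
  refine le_antisymm (Submodule.span_mono Set.inter_subset_left) (Submodule.span_le.mpr ?_)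
  intro z (hzw : ⟪w, z⟫ = 0)
  set c := ⟪v, z⟫ / ⟪v, p⟫
  have hproj : z - c • p ∈ {x | ⟪w, x⟫ = 0} ∩ C := by
    refine ⟨?_, hC ⟨?_, ?_⟩⟩ <;>
      simp only [Set.mem_ofPred_eq, inner_sub_right, real_inner_smul_right, hzw, hpw]
    · ring
    · rw [div_mul_cancel₀ _ hpv, sub_self]
    · ring
  rw [show z = (z - c • p) + c • p by abel]
  exact Submodule.add_mem _ (Submodule.subset_span hproj)
    (Submodule.smul_mem _ c (Submodule.subset_span ⟨hpw, hpC⟩))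

theorem inner_neg_of_mem_span_pair {u v w b p m : V} (hu : u ∈ Submodule.span ℝ {v, w})
    (hvb : ⟪v, b⟫ < 0) (hwb : ⟪w, b⟫ < 0) (hub : ⟪u, b⟫ < 0)
    (hvp : ⟪v, p⟫ < 0) (hwp : ⟪w, p⟫ = 0) (hup : 0 < ⟪u, p⟫)
    (hvm : 0 < ⟪v, m⟫) (hwm : ⟪w, m⟫ < 0) : ⟪u, m⟫ < 0 := by
  obtain ⟨a, c, rfl⟩ := Submodule.mem_span_pair.mp hu
  simp only [inner_add_left, real_inner_smul_left, hwp, mul_zero, add_zero] at hub hup ⊢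
  have ha : a < 0 := neg_of_mul_pos_left hup hvp.le
  have hc : 0 < c := by nlinarith
  nlinarith

end InnerProductSpace

section Arrangement

local notation "ℝ^" n:max => EuclideanSpace ℝ (Fin n)

def arrCell (A : Set (Set (ℝ^ n))) (ν : Set (ℝ^ n) → ℝ^ n) (x : ℝ^ n) : Set (ℝ^ n) :=
  {y | ∀ K ∈ A, 0 < ⟪ν K, x⟫ * ⟪ν K, y⟫}

def arrRegion (A : Set (Set (ℝ^ n))) (x : ℝ^ n) : Set (ℝ^ n) :=
  closure (connectedComponentIn (arrComplement A) x)

variable {A : Set (Set (ℝ^ n))} {ν : Set (ℝ^ n) → ℝ^ n}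

theorem exists_normal_inner_neg {K : Set (ℝ^ n)} (hK : IsHyperplane K) {x : ℝ^ n} (hx : x ∉ K) :
    ∃ v : ℝ^ n, K = {y | ⟪v, y⟫ = 0} ∧ ⟪v, x⟫ < 0 := by
  obtain ⟨v, -, rfl⟩ := hK
  rcases (Ne.lt_or_gt hx : ⟪v, x⟫ < 0 ∨ 0 < ⟪v, x⟫) with h | h
  · exact ⟨v, rfl, h⟩
  · exact ⟨-v, by simp only [inner_neg_left, neg_eq_zero], by rwa [inner_neg_left, neg_lt_zero]⟩

theorem arrComplement_anti {A' : Set (Set (ℝ^ n))} (h : A' ⊆ A) :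
    arrComplement A ⊆ arrComplement A' :=
  Set.compl_subset_compl.mpr (Set.biUnion_subset_biUnion_left h)

theorem inner_ne_zero_of_mem_arrComplement (hν : ∀ K ∈ A, K = {y | ⟪ν K, y⟫ = 0})
    {K : Set (ℝ^ n)} (hK : K ∈ A) {x : ℝ^ n} (hx : x ∈ arrComplement A) : ⟪ν K, x⟫ ≠ 0 :=
  fun h => hx (Set.mem_biUnion hK ((hν K hK).superset h))

theorem arrCell_eq_biInter (x : ℝ^ n) :
    arrCell A ν x = ⋂ K ∈ A, {y | 0 < ⟪⟪ν K, x⟫ • ν K, y⟫} := by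
  ext y
  simp [arrCell, real_inner_smul_left]

theorem convex_arrCell (x : ℝ^ n) : Convex ℝ (arrCell A ν x) := by
  rw [arrCell_eq_biInter]
  exact convex_iInter₂ fun K _ => convex_halfSpace_gt (innerₛₗ ℝ _).isLinear 0

theorem isOpen_arrCell (hA : A.Finite) (x : ℝ^ n) : IsOpen (arrCell A ν x) := by
  rw [arrCell_eq_biInter]
  exact hA.isOpen_biInter fun _ _ =>
    isOpen_lt continuous_const (continuous_const.inner continuous_id)

theorem mem_arrCell_self (hν : ∀ K ∈ A, K = {y | ⟪ν K, y⟫ = 0}) {x : ℝ^ n}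
    (hx : x ∈ arrComplement A) : x ∈ arrCell A ν x :=
  fun _ hK => mul_self_pos.mpr (inner_ne_zero_of_mem_arrComplement hν hK hx)

theorem arrCell_subset_arrComplement (hν : ∀ K ∈ A, K = {y | ⟪ν K, y⟫ = 0}) (x : ℝ^ n) :
    arrCell A ν x ⊆ arrComplement A := by
  intro y hy hyA
  obtain ⟨K, hK, hyK⟩ := Set.mem_iUnion₂.mp hyA
  have hyK : ⟪ν K, y⟫ = 0 := (hν K hK).subset hyK
  simpa [hyK] using hy K hK

theorem connectedComponentIn_arrComplement_eq_arrCell (hν : ∀ K ∈ A, K = {y | ⟪ν K, y⟫ = 0})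
    {x : ℝ^ n} (hx : x ∈ arrComplement A) :
    connectedComponentIn (arrComplement A) x = arrCell A ν x := by
  refine subset_antisymm (fun y hy K hK => ?_)
    ((convex_arrCell x).isPreconnected.subset_connectedComponentIn (mem_arrCell_self hν hx)
      (arrCell_subset_arrComplement hν x))
  -- a connected subset of the complement of `K` stays on one side of it
  let f : ℝ^ n → ℝ := fun z => ⟪ν K, x⟫ * ⟪ν K, z⟫
  have hf : Continuous f := continuous_const.mul (continuous_const.inner continuous_id)
  refine isPreconnected_connectedComponentIn.subset_left_of_subset_union (u := {z | 0 < f z})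
    (v := {z | f z < 0}) (isOpen_lt continuous_const hf) (isOpen_lt hf continuous_const)
    (Set.disjoint_left.mpr fun z (hz : 0 < f z) (hz' : f z < 0) => hz.not_gt hz')
    (fun z hz => ?_)
    ⟨x, mem_connectedComponentIn hx, mem_arrCell_self hν hx K hK⟩ hy
  have hz := connectedComponentIn_subset _ _ hz
  exact (mul_ne_zero (inner_ne_zero_of_mem_arrComplement hν hK hx)
    (inner_ne_zero_of_mem_arrComplement hν hK hz)).lt_or_gt.symm

theorem isRegion_iff_exists_arrRegion {R : Set (ℝ^ n)} :
    IsRegion A R ↔ ∃ x ∈ arrComplement A, R = arrRegion A x :=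
  Iff.rfl

theorem interior_arrRegion (hA : A.Finite) (hν : ∀ K ∈ A, K = {y | ⟪ν K, y⟫ = 0}) {x : ℝ^ n}
    (hx : x ∈ arrComplement A) : interior (arrRegion A x) = arrCell A ν x := by
  have hopen := isOpen_arrCell (ν := ν) hA x
  rw [arrRegion, connectedComponentIn_arrComplement_eq_arrCell hν hx,
    (convex_arrCell x).interior_closure_eq_interior_of_nonempty_interior
      (by rw [hopen.interior_eq]; exact ⟨x, mem_arrCell_self hν hx⟩), hopen.interior_eq]

theorem setOf_mul_inner_nonneg_subset_arrRegion (hν : ∀ K ∈ A, K = {y | ⟪ν K, y⟫ = 0})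
    {x : ℝ^ n} (hx : x ∈ arrComplement A) :
    {y | ∀ K ∈ A, 0 ≤ ⟪ν K, x⟫ * ⟪ν K, y⟫} ⊆ arrRegion A x := by
  intro y hy
  rw [arrRegion, connectedComponentIn_arrComplement_eq_arrCell hν hx]
  -- `y + t • x` lies in the open cell for `t > 0`
  have hlim : Filter.Tendsto (fun t : ℝ => y + t • x) (nhdsWithin 0 (Set.Ioi 0)) (nhds y) := by
    have := ((by fun_prop : Continuous fun t : ℝ => y + t • x).tendsto 0).mono_left
      (nhdsWithin_le_nhds (s := Set.Ioi 0))
    simpa using this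
  refine mem_closure_of_tendsto hlim
    (eventually_nhdsWithin_of_forall fun t (ht : 0 < t) K hK => ?_)
  have hxK := inner_ne_zero_of_mem_arrComplement hν hK hx
  rw [inner_add_right, real_inner_smul_right, mul_add]
  nlinarith [hy K hK, mul_pos ht (mul_self_pos.mpr hxK)]

theorem arrRegion_subset_arrRegion {A' : Set (Set (ℝ^ n))} (h : A' ⊆ A) (x : ℝ^ n) :
    arrRegion A x ⊆ arrRegion A' x :=
  closure_mono (connectedComponentIn_mono x (arrComplement_anti h))

theorem mem_sepSet_arrRegion_iff (hA : A.Finite) (hν : ∀ K ∈ A, K = {y | ⟪ν K, y⟫ = 0})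
    {xB xR : ℝ^ n} (hνB : ∀ K ∈ A, ⟪ν K, xB⟫ < 0) (hxB : xB ∈ arrComplement A)
    (hxR : xR ∈ arrComplement A) {K : Set (ℝ^ n)} (hK : K ∈ A) :
    K ∈ sepSet A (arrRegion A xB) (arrRegion A xR) ↔ 0 < ⟪ν K, xR⟫ := by
  rw [sepSet, Set.mem_ofPred_eq, Separates, interior_arrRegion hA hν hxB,
    interior_arrRegion hA hν hxR]
  constructor
  · rintro ⟨-, v, -, hKv, hR, hB⟩
    obtain ⟨c, hc⟩ := exists_eq_smul_of_setOf_inner_subset (u := ν K) (v := v)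
      (hKv ▸ (hν K hK).subset)
    have hvR := hR xR (mem_arrCell_self hν hxR)
    have hνB := hνB K hK
    rw [hc, real_inner_smul_left] at hνB ⊢
    exact mul_pos (pos_of_mul_neg_left hνB (hB xB (mem_arrCell_self hν hxB)).le) hvR
  · intro hR
    refine ⟨hK, ν K, ?_, hν K hK, fun y hy => pos_of_mul_pos_right (hy K hK) hR.le,
      fun y hy => neg_of_mul_pos_right (hy K hK) (hνB K hK).le⟩
    rintro h0
    simp [h0] at hR

theorem notMem_sepSet_arrRegion_iff (hA : A.Finite) (hν : ∀ K ∈ A, K = {y | ⟪ν K, y⟫ = 0})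
    {xB xR : ℝ^ n} (hνB : ∀ K ∈ A, ⟪ν K, xB⟫ < 0) (hxB : xB ∈ arrComplement A)
    (hxR : xR ∈ arrComplement A) {K : Set (ℝ^ n)} (hK : K ∈ A) :
    K ∉ sepSet A (arrRegion A xB) (arrRegion A xR) ↔ ⟪ν K, xR⟫ < 0 := by
  rw [mem_sepSet_arrRegion_iff hA hν hνB hxB hxR hK, not_lt]
  exact (inner_ne_zero_of_mem_arrComplement hν hK hxR).le_iff_lt

theorem mem_span_pair_of_mem_pencil (hν : ∀ K ∈ A, K = {y | ⟪ν K, y⟫ = 0})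
    {H H' K : Set (ℝ^ n)} (hH : H ∈ A) (hH' : H' ∈ A) (hK : K ∈ pencil A H H') :
    ν K ∈ Submodule.span ℝ {ν H, ν H'} := by
  refine mem_span_pair_of_inter_subset ?_
  rw [← hν H hH, ← hν H' hH', ← hν K hK.1]
  exact hK.2

theorem isBasicIn_pencil_of_mul_inner_nonneg (hν : ∀ K ∈ A, K = {y | ⟪ν K, y⟫ = 0})
    {H H' : Set (ℝ^ n)} (hH : H ∈ A) (hH' : H' ∈ A) {x p : ℝ^ n} (hx : x ∈ arrComplement A)
    (hpH' : ⟪ν H', p⟫ = 0) (hpH : ⟪ν H, p⟫ ≠ 0)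
    (hp : ∀ K ∈ pencil A H H', 0 ≤ ⟪ν K, x⟫ * ⟪ν K, p⟫) :
    IsBasicIn (pencil A H H') (arrRegion A x) H' := by
  have hsub : pencil A H H' ⊆ A := fun K hK => hK.1
  have hcl := setOf_mul_inner_nonneg_subset_arrRegion (fun K hK => hν K (hsub hK))
    (arrComplement_anti hsub hx)
  refine ⟨⟨hH', Set.inter_subset_right⟩, arrRegion (pencil A H H') x,
    ⟨x, arrComplement_anti hsub hx, rfl⟩, arrRegion_subset_arrRegion hsub x,
    span_inter_eq_span_of_mem_diff (hν H hH) (hν H' hH') (fun z hz => hcl fun K hK => ?_)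
      (hcl hp) ⟨(hν H' hH').superset hpH', fun h => hpH ((hν H hH).subset h)⟩⟩
  rw [(hν K hK.1).subset (hK.2 hz), mul_zero]

theorem mem_sepSet_of_regLT_of_eq_diff {B J Jst HJ : Set (ℝ^ n)} (hlt : regLT A B Jst J)
    (hsep : sepSet A B Jst = sepSet A B J \ {HJ}) : HJ ∈ sepSet A B J := by
  by_contra h
  rw [Set.sdiff_singleton_eq_self h] at hsep
  exact hlt.2 hsep.superset

theorem SubcritReg.notMem_sepSet_of_eq_diff {B J M Jst HJ : Set (ℝ^ n)}
    (hsub : SubcritReg A B J M) (hcov : CoversReg A B J Jst)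
    (hsep : sepSet A B Jst = sepSet A B J \ {HJ}) :
    HJ ∉ sepSet A B M := by
  intro hHJ
  refine hsub.2.2.1 fun K hK => ?_
  rcases eq_or_ne K HJ with rfl | hne
  · exact hHJ
  · exact hsub.2.2.2.1 Jst hcov.1 hcov.2.1 (hsep ▸ ⟨hK, hne⟩)

end Arrangement

/-- **Lemma (Reading, Lemma 15).** Let `(J,M)` be a subcritical pair in 𝒫(𝒜,B) and let `HJ`
be the hyperplane separating `J` from the unique region `Jst` covered by `J` (so that
`S(Jst) = S(J) − {HJ}`).  If `H ∈ A` satisfies `H ∉ S(J)` and `H ∈ S(M)`, then `HJ` is basic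
in the rank-two subarrangement consisting of all hyperplanes of `A` containing `H ∩ HJ`. -/
theorem shard_arrow {n : ℕ}
    (A : Set (Set (EuclideanSpace ℝ (Fin n)))) (B : Set (EuclideanSpace ℝ (Fin n)))
    (hA : IsCentralArrangement A) (hB : IsRegion A B)
    (J M : Set (EuclideanSpace ℝ (Fin n))) (hsub : SubcritReg A B J M)
    (Jst HJ : Set (EuclideanSpace ℝ (Fin n)))
    (hcov : CoversReg A B J Jst) (hsep : sepSet A B Jst = sepSet A B J \ {HJ})
    (H : Set (EuclideanSpace ℝ (Fin n))) (hHA : H ∈ A)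
    (hHJ' : H ∉ sepSet A B J) (hHM : H ∈ sepSet A B M) :
    IsBasicIn (pencil A H HJ) B HJ := by
  obtain ⟨hAfin, -, hAhyp⟩ := hA
  obtain ⟨xB, hxB, rfl⟩ := isRegion_iff_exists_arrRegion.mp hB
  choose! ν hν hνB using fun K hK =>
    exists_normal_inner_neg (hAhyp K hK) fun hxK => hxB (Set.mem_biUnion hK hxK)
  have hHJM := hsub.notMem_sepSet_of_eq_diff hcov hsep
  have hHJJ := mem_sepSet_of_regLT_of_eq_diff hcov.2.1 hsep
  obtain ⟨hJ, hM, -, hbelowJ, -⟩ := hsub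
  obtain ⟨hJst, hJstJ, -⟩ := hcov
  obtain ⟨xJ, hxJ, rfl⟩ := isRegion_iff_exists_arrRegion.mp hJ
  obtain ⟨xM, hxM, rfl⟩ := isRegion_iff_exists_arrRegion.mp hM
  obtain ⟨xJst, hxJst, rfl⟩ := isRegion_iff_exists_arrRegion.mp hJst
  have hmem := fun {x} hx {K} hK =>
    mem_sepSet_arrRegion_iff hAfin hν hνB hxB (xR := x) hx (K := K) hK
  have hnotMem := fun {x} hx {K} hK =>
    notMem_sepSet_arrRegion_iff hAfin hν hνB hxB (xR := x) hx (K := K) hK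
  obtain ⟨p, hpseg, hpHJ⟩ := exists_mem_segment_inner_eq_zero
    ((hnotMem hxJst hHJJ.1).1 (by simp [hsep])) ((hmem hxJ hHJJ.1).1 hHJJ)
  have hp : ∀ K ∈ A, K ∉ sepSet A (arrRegion A xB) (arrRegion A xJ) → ⟪ν K, p⟫ < 0 :=
    fun K hK hKJ => (convex_setOf_inner_neg (ν K)).segment_subset
      ((hnotMem hxJst hK).1 fun h => hKJ (hsep ▸ h).1) ((hnotMem hxJ hK).1 hKJ) hpseg
  refine isBasicIn_pencil_of_mul_inner_nonneg hν hHA hHJJ.1 hxB hpHJ (hp H hHA hHJ').ne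
    fun K hK => ?_
  refine mul_nonneg_of_nonpos_of_nonpos (hνB K hK.1).le (not_lt.mp fun hKp => ?_)
  have hKHJ : K ≠ HJ := by rintro rfl; simp [hpHJ] at hKp
  have hKJ : K ∈ sepSet A (arrRegion A xB) (arrRegion A xJ) :=
    Classical.byContradiction fun h => lt_asymm (hp K hK.1 h) hKp
  have hKJst : K ∈ sepSet A (arrRegion A xB) (arrRegion A xJst) := hsep ▸ ⟨hKJ, hKHJ⟩
  have hKM := hbelowJ _ hJst hJstJ hKJst
  exact ((hmem hxM hK.1).1 hKM).not_gt (inner_neg_of_mem_span_pair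
    (mem_span_pair_of_mem_pencil hν hHA hHJJ.1 hK) (hνB H hHA) (hνB HJ hHJJ.1) (hνB K hK.1)
    (hp H hHA hHJ') hpHJ hKp ((hmem hxM hHA).1 hHM) ((hnotMem hxM hHJJ.1).1 hHJM))
end
end
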